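/- (Basis Pursuit recovery guarantee under the stripe-coherence bound.) Let D be a convolutional dictionary with shifted mutual coherences μ_s, and let Γ ∈ ℝ^{mN} satisfy max_{i∈ℤ/Nℤ} ζ_i(Γ) < (1/2)·(1 + μ_0). Then Γ is the unique minimizer of the ℓ1 norm over the affine set {Γ̂ ∈ ℝ^{mN} : DΓ̂ = DΓ}; i.e. every Γ̂ ≠ Γ with DΓ̂ = DΓ satisfies ‖Γ̂‖_1 > ‖Γ‖_1. -/
import Mathlib


open Finset

noncomputable section

attribute [local instance] Classical.propDecidable

/-- The stripe index set `S i`: all column indices `(t, j)` whose shift position `t` lies in the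
cyclic window `{i - n + 1, …, i + n - 1}` (mod `N`). -/
def stripeSet (N n m : ℕ) [NeZero N] (i : ZMod N) : Finset (ZMod N × Fin m) :=
  Finset.univ.filter (fun a =>
    ∃ s ∈ Finset.Icc (-(n : ℤ) + 1) ((n : ℤ) - 1), a.1 = i + (s : ZMod N))

/-- The number of nonzero entries of `Γ` in the `i`-th stripe. -/
def stripeNnz (N n m : ℕ) [NeZero N] (Γ : ZMod N × Fin m → ℝ) (i : ZMod N) : ℕ :=
  ((stripeSet N n m i).filter (fun a => Γ a ≠ 0)).card

/-- The `ℓ_{0,∞}` norm of a global vector: the maximal number of nonzeros in a stripe. -/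
def l0inf (N n m : ℕ) [NeZero N] (Γ : ZMod N × Fin m → ℝ) : ℕ :=
  Finset.univ.sup (fun i : ZMod N => stripeNnz N n m Γ i)

/-- Inner product of two columns of `D`. -/
def colInner {N m : ℕ} [NeZero N] (D : Matrix (ZMod N) (ZMod N × Fin m) ℝ)
    (a b : ZMod N × Fin m) : ℝ :=
  ∑ t, D t a * D t b

/-- The mutual coherence `μ(D)`: the maximal absolute inner product between distinct columns. -/
def mutualCoherence {N m : ℕ} [NeZero N] (D : Matrix (ZMod N) (ZMod N × Fin m) ℝ) : ℝ :=
  sSup {x | ∃ a b : ZMod N × Fin m, a ≠ b ∧ x = |colInner D a b|}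

/-- `D` is a convolutional dictionary: its columns are the cyclic shifts of the columns of a
local dictionary `D_L ∈ ℝ^{n×m}`, and all columns have unit `ℓ2` norm. -/
def IsConvDict (N n m : ℕ) [NeZero N] (D : Matrix (ZMod N) (ZMod N × Fin m) ℝ) : Prop :=
  (∃ DL : Fin n → Fin m → ℝ, ∀ (i t : ZMod N) (j : Fin m),
      D t (i, j) = if h : (t - i).val < n then DL ⟨(t - i).val, h⟩ j else 0) ∧
  ∀ a : ZMod N × Fin m, ∑ t, (D t a) ^ 2 = 1

/-- The shifted mutual coherence `μ_s`: the maximal absolute inner product between a column at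
shift position `i` and a column at shift position `i + s` (distinct columns when `s = 0`). -/
def shiftedMu {N m : ℕ} [NeZero N] (D : Matrix (ZMod N) (ZMod N × Fin m) ℝ) (s : ℤ) : ℝ :=
  sSup {x | ∃ (i : ZMod N) (j l : Fin m), (s = 0 → j ≠ l) ∧
    x = |colInner D (i, j) (i + (s : ZMod N), l)|}

/-- `n_{i,s}(Γ)`: the number of nonzeros of `Γ` in the local chunk at shift `s` of the
`i`-th stripe. -/
def shiftNnz (N m : ℕ) [NeZero N] (Γ : ZMod N × Fin m → ℝ) (i : ZMod N) (s : ℤ) : ℕ :=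
  (Finset.univ.filter (fun j : Fin m => Γ (i + (s : ZMod N), j) ≠ 0)).card

/-- The stripe coherence `ζ_i(Γ) = Σ_s n_{i,s}(Γ) · μ_s`. -/
def stripeCoherence (N n m : ℕ) [NeZero N] (D : Matrix (ZMod N) (ZMod N × Fin m) ℝ)
    (Γ : ZMod N × Fin m → ℝ) (i : ZMod N) : ℝ :=
  ∑ s ∈ Finset.Icc (-(n : ℤ) + 1) ((n : ℤ) - 1), (shiftNnz N m Γ i s : ℝ) * shiftedMu D s

/-- The Stripe-Spark `σ_∞(D)`: the least `ℓ_{0,∞}` norm of a nonzero vector in the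
null space of `D` (`⊤` if the null space is trivial). -/
def stripeSpark (N n m : ℕ) [NeZero N] (D : Matrix (ZMod N) (ZMod N × Fin m) ℝ) : ℕ∞ :=
  sInf {k : ℕ∞ | ∃ Δ : ZMod N × Fin m → ℝ, Δ ≠ 0 ∧ D.mulVec Δ = 0 ∧ (l0inf N n m Δ : ℕ∞) = k}

/-- The `ℓ1` norm of a global vector. -/
def l1norm {N m : ℕ} [NeZero N] (Γ : ZMod N × Fin m → ℝ) : ℝ :=
  ∑ a, |Γ a|


section BPAux
variable {N n m : ℕ} [NeZero N] {D : Matrix (ZMod N) (ZMod N × Fin m) ℝ}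

lemma colInner_comm (D : Matrix (ZMod N) (ZMod N × Fin m) ℝ) (a b : ZMod N × Fin m) :
    colInner D a b = colInner D b a :=
  Finset.sum_congr rfl fun t _ => mul_comm _ _

lemma colInner_self (hD : IsConvDict N n m D) (a : ZMod N × Fin m) : colInner D a a = 1 := by
  simpa [colInner, sq] using hD.2 a

lemma abs_colInner_le_one (hD : IsConvDict N n m D) (a b : ZMod N × Fin m) :
    |colInner D a b| ≤ 1 := by
  rw [← sq_le_one_iff_abs_le_one]
  have h := Finset.sum_mul_sq_le_sq_mul_sq Finset.univ (fun t => D t a) (fun t => D t b)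
  rw [hD.2 a, hD.2 b] at h
  simpa [colInner] using h

lemma shiftedMu_bddAbove (hD : IsConvDict N n m D) (s : ℤ) :
    BddAbove {x | ∃ (i : ZMod N) (j l : Fin m), (s = 0 → j ≠ l) ∧
      x = |colInner D (i, j) (i + (s : ZMod N), l)|} := by
  refine ⟨1, ?_⟩
  rintro x ⟨i, j, l, -, rfl⟩
  exact abs_colInner_le_one hD _ _

lemma shiftedMu_nonneg (D : Matrix (ZMod N) (ZMod N × Fin m) ℝ) (s : ℤ) :
    0 ≤ shiftedMu D s := by
  apply Real.sSup_nonneg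
  rintro x ⟨i, j, l, -, rfl⟩
  positivity

lemma le_shiftedMu (hD : IsConvDict N n m D) {s : ℤ} {i : ZMod N} {j l : Fin m}
    (h : s = 0 → j ≠ l) :
    |colInner D (i, j) (i + (s : ZMod N), l)| ≤ shiftedMu D s :=
  le_csSup (shiftedMu_bddAbove hD s) ⟨i, j, l, h, rfl⟩

lemma shiftedMu_neg (D : Matrix (ZMod N) (ZMod N × Fin m) ℝ) (s : ℤ) :
    shiftedMu D (-s) = shiftedMu D s := by
  unfold shiftedMu
  congr 1
  ext x
  constructor
  · rintro ⟨i, j, l, h, rfl⟩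
    refine ⟨i + ((-s : ℤ) : ZMod N), l, j, fun hs => (h (by omega)).symm, ?_⟩
    rw [colInner_comm]
    congr 2
    push_cast
    ring
  · rintro ⟨i, j, l, h, rfl⟩
    refine ⟨i + ((s : ℤ) : ZMod N), l, j, fun hs => (h (by omega)).symm, ?_⟩
    rw [colInner_comm]
    congr 2
    push_cast
    ring

lemma exists_shift (hD : IsConvDict N n m D) {i t : ZMod N} {j l : Fin m}
    (h : colInner D (i, j) (t, l) ≠ 0) :
    ∃ s : ℤ, s ∈ Finset.Icc (-(n : ℤ) + 1) ((n : ℤ) - 1) ∧ t = i + (s : ZMod N) := by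
  obtain ⟨u, -, hu⟩ := Finset.exists_ne_zero_of_sum_ne_zero h
  have h1 : D u (i, j) ≠ 0 := left_ne_zero_of_mul hu
  have h2 : D u (t, l) ≠ 0 := right_ne_zero_of_mul hu
  obtain ⟨DL, hDL⟩ := hD.1
  rw [hDL] at h1 h2
  have hp : (u - i).val < n := by by_contra hc; simp [hc] at h1
  have hq : (u - t).val < n := by by_contra hc; simp [hc] at h2
  refine ⟨((u - i).val : ℤ) - ((u - t).val : ℤ), by rw [Finset.mem_Icc]; omega, ?_⟩
  push_cast
  rw [ZMod.natCast_rightInverse (u - i), ZMod.natCast_rightInverse (u - t)]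
  ring

/-- `ζ_t` expressed as a sum of `μ_s` over the nonzero positions in the stripe. -/
lemma stripe_sum_eq (Γ : ZMod N × Fin m → ℝ) (t : ZMod N) :
    ∑ p ∈ (Finset.Icc (-(n : ℤ) + 1) ((n : ℤ) - 1) ×ˢ (Finset.univ : Finset (Fin m))).filter
        (fun p => Γ (t + (p.1 : ZMod N), p.2) ≠ 0), shiftedMu D p.1
      = stripeCoherence N n m D Γ t := by
  rw [stripeCoherence, Finset.sum_filter, Finset.sum_product]
  refine Finset.sum_congr rfl fun s _ => ?_
  simp only
  rw [← Finset.sum_filter, Finset.sum_const, nsmul_eq_mul, shiftNnz]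

/-- Key counting bound: for each column `b`, the sum of `|⟨d_a, d_b⟩|` over the support of `Γ`
(minus `b`) plus the diagonal correction is at most the stripe coherence at `b.1`. -/
lemma colsum_le (hD : IsConvDict N n m D) (hn : 1 ≤ n) (Γ : ZMod N × Fin m → ℝ)
    (b : ZMod N × Fin m) :
    (∑ a ∈ (Finset.univ.filter (fun a => Γ a ≠ 0)).erase b, |colInner D a b|)
      + (if Γ b ≠ 0 then shiftedMu D 0 else 0) ≤ stripeCoherence N n m D Γ b.1 := by
  classical
  set Icc := Finset.Icc (-(n : ℤ) + 1) ((n : ℤ) - 1) with hIcc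
  set T := Finset.univ.filter (fun a : ZMod N × Fin m => Γ a ≠ 0) with hT
  set S := (T.erase b).filter (fun a => colInner D a b ≠ 0) with hS
  set P := (Icc ×ˢ (Finset.univ : Finset (Fin m))).filter
      (fun p : ℤ × Fin m => Γ (b.1 + (p.1 : ZMod N), p.2) ≠ 0) with hP
  have hsum0 : ∑ a ∈ T.erase b, |colInner D a b| = ∑ a ∈ S, |colInner D a b| := by
    refine (Finset.sum_subset (Finset.filter_subset _ _) fun a ha hna => ?_).symm
    have hz : colInner D a b = 0 := by
      by_contra hc
      exact hna (Finset.mem_filter.mpr ⟨ha, hc⟩)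
    rw [hz, abs_zero]
  have hex : ∀ a ∈ S, ∃ s : ℤ, s ∈ Icc ∧ a.1 = b.1 + (s : ZMod N) := by
    intro a ha
    rw [hS, Finset.mem_filter] at ha
    have : colInner D (b.1, b.2) (a.1, a.2) ≠ 0 := by
      rw [← colInner_comm]; simpa using ha.2
    exact exists_shift hD this
  let σ : ZMod N × Fin m → ℤ := fun a =>
    if h : ∃ s : ℤ, s ∈ Icc ∧ a.1 = b.1 + (s : ZMod N) then h.choose else 0
  have hσ : ∀ a ∈ S, σ a ∈ Icc ∧ a.1 = b.1 + ((σ a : ℤ) : ZMod N) := by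
    intro a ha
    have h := hex a ha
    simp only [σ, dif_pos h]
    exact ⟨h.choose_spec.1, h.choose_spec.2⟩
  let φ : ZMod N × Fin m → ℤ × Fin m := fun a => (σ a, a.2)
  have hbound : ∀ a ∈ S, |colInner D a b| ≤ shiftedMu D (σ a) := by
    intro a ha
    obtain ⟨hmem, heq⟩ := hσ a ha
    have hne : a ≠ b := by
      rw [hS, Finset.mem_filter] at ha
      exact Finset.ne_of_mem_erase ha.1
    have hb : b = (a.1 + ((-(σ a) : ℤ) : ZMod N), b.2) := by
      rw [heq]
      refine Prod.ext ?_ rfl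
      push_cast
      ring
    calc |colInner D a b|
        = |colInner D (a.1, a.2) (a.1 + ((-(σ a) : ℤ) : ZMod N), b.2)| := by rw [← hb]
      _ ≤ shiftedMu D (-(σ a)) := by
          refine le_shiftedMu hD fun hs => fun hjl => hne ?_
          have hs0 : σ a = 0 := by omega
          refine Prod.ext ?_ hjl
          rw [heq, hs0]
          push_cast
          ring
      _ = shiftedMu D (σ a) := shiftedMu_neg D _
  have hinj : ∀ a₁ ∈ S, ∀ a₂ ∈ S, φ a₁ = φ a₂ → a₁ = a₂ := by
    intro a₁ h₁ a₂ h₂ heq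
    have e1 := (hσ a₁ h₁).2
    have e2 := (hσ a₂ h₂).2
    simp only [φ, Prod.mk.injEq] at heq
    obtain ⟨hσeq, h2⟩ := heq
    refine Prod.ext ?_ h2
    rw [e1, e2, hσeq]
  have himg : ∀ a ∈ S, φ a ∈ P := by
    intro a ha
    obtain ⟨hmem, heq⟩ := hσ a ha
    rw [hP, Finset.mem_filter]
    have haT : Γ a ≠ 0 := by
      rw [hS, Finset.mem_filter, hT] at ha
      have := Finset.mem_of_mem_erase ha.1
      simpa using this
    refine ⟨Finset.mem_product.mpr ⟨hmem, Finset.mem_univ _⟩, ?_⟩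
    have : (b.1 + ((σ a : ℤ) : ZMod N), a.2) = a := by
      refine Prod.ext heq.symm rfl
    rw [this]
    exact haT
  have main : ∑ a ∈ S, |colInner D a b| ≤ ∑ p ∈ S.image φ, shiftedMu D p.1 := by
    rw [Finset.sum_image hinj]
    exact Finset.sum_le_sum hbound
  by_cases hb : Γ b ≠ 0
  · have h0P : ((0 : ℤ), b.2) ∈ P := by
      rw [hP, Finset.mem_filter]
      constructor
      · refine Finset.mem_product.mpr ⟨?_, Finset.mem_univ _⟩
        rw [hIcc, Finset.mem_Icc]; omega
      · simpa using hb
    have h0img : ((0 : ℤ), b.2) ∉ S.image φ := by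
      intro hc
      obtain ⟨a, haS, hae⟩ := Finset.mem_image.mp hc
      have heq := (hσ a haS).2
      simp only [φ, Prod.mk.injEq] at hae
      obtain ⟨hσ0, ha2⟩ := hae
      have : a = b := by
        refine Prod.ext ?_ ha2
        rw [heq, hσ0]; push_cast; ring
      rw [hS, Finset.mem_filter] at haS
      exact (Finset.ne_of_mem_erase haS.1) this
    have hsub : S.image φ ⊆ P.erase ((0 : ℤ), b.2) := by
      intro p hp
      obtain ⟨a, haS, hae⟩ := Finset.mem_image.mp hp
      refine Finset.mem_erase.mpr ⟨?_, hae ▸ himg a haS⟩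
      intro hc
      exact h0img (hc ▸ hp)
    have h2 : ∑ p ∈ S.image φ, shiftedMu D p.1 ≤ ∑ p ∈ P.erase ((0 : ℤ), b.2), shiftedMu D p.1 :=
      Finset.sum_le_sum_of_subset_of_nonneg hsub (fun p _ _ => shiftedMu_nonneg D p.1)
    have h3 : shiftedMu D 0 + ∑ p ∈ P.erase ((0 : ℤ), b.2), shiftedMu D p.1
        = ∑ p ∈ P, shiftedMu D p.1 := Finset.add_sum_erase P (fun p => shiftedMu D p.1) h0P
    have h4 : (∑ p ∈ P, shiftedMu D p.1) = stripeCoherence N n m D Γ b.1 := stripe_sum_eq Γ b.1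
    rw [if_pos hb, hsum0]
    have : ((0 : ℤ) : ZMod N) = ((0 : ℤ) : ZMod N) := rfl
    linarith [main, h2]
  · rw [if_neg hb]
    have h2 : ∑ p ∈ S.image φ, shiftedMu D p.1 ≤ ∑ p ∈ P, shiftedMu D p.1 :=
      Finset.sum_le_sum_of_subset_of_nonneg (fun p hp => by
        obtain ⟨a, haS, hae⟩ := Finset.mem_image.mp hp
        exact hae ▸ himg a haS) (fun p _ _ => shiftedMu_nonneg D p.1)
    have h4 : (∑ p ∈ P, shiftedMu D p.1) = stripeCoherence N n m D Γ b.1 := stripe_sum_eq Γ b.1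
    rw [hsum0]
    linarith [main]

end BPAux

/-- Basis Pursuit recovery guarantee under the stripe-coherence bound: if
`max_i ζ_i(Γ) < (1/2)(1 + μ_0)`, then `Γ` is the unique `ℓ1` minimizer among all representations
of the signal `DΓ`. -/
theorem bp_recovery_stripeCoherence (N n m : ℕ) [NeZero N]
    (hm : 1 ≤ m) (hn : 1 ≤ n) (hN : 2 * n - 1 ≤ N)
    (D : Matrix (ZMod N) (ZMod N × Fin m) ℝ) (hD : IsConvDict N n m D)
    (Γ : ZMod N × Fin m → ℝ)
    (hΓ : Finset.univ.sup' ⟨(0 : ZMod N), Finset.mem_univ 0⟩ (stripeCoherence N n m D Γ) <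
      (1 / 2) * (1 + shiftedMu D 0)) :
    ∀ Γ' : ZMod N × Fin m → ℝ, Γ' ≠ Γ → D.mulVec Γ' = D.mulVec Γ →
      l1norm Γ < l1norm Γ' := by
  intro Γ' hne heq
  classical
  set μ0 := shiftedMu D 0 with hμ0def
  set Z := Finset.univ.sup' ⟨(0 : ZMod N), Finset.mem_univ 0⟩ (stripeCoherence N n m D Γ) with hZ
  set Δ : ZMod N × Fin m → ℝ := fun a => Γ' a - Γ a with hΔdef
  have hΔ0 : D.mulVec Δ = 0 := by
    have hΔeq : Δ = Γ' - Γ := rfl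
    rw [hΔeq, Matrix.mulVec_sub, heq, sub_self]
  obtain ⟨a0, ha0⟩ : ∃ a, Δ a ≠ 0 := by
    by_contra h
    push_neg at h
    apply hne
    funext a
    have := h a
    simp only [hΔdef] at this
    linarith [sub_eq_zero.mp this]
  set T := Finset.univ.filter (fun a : ZMod N × Fin m => Γ a ≠ 0) with hT
  set A := ∑ a ∈ T, |Δ a| with hA
  -- pointwise null-space bound
  have hpoint : ∀ a : ZMod N × Fin m, |Δ a| ≤
      ∑ b ∈ Finset.univ.erase a, |Δ b| * |colInner D a b| := by
    intro a
    have h0 : ∑ b, colInner D a b * Δ b = 0 := by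
      calc ∑ b, colInner D a b * Δ b
          = ∑ b, ∑ t, (D t a * D t b) * Δ b := by
            refine Finset.sum_congr rfl fun b _ => ?_
            rw [colInner, Finset.sum_mul]
        _ = ∑ t, ∑ b, (D t a * D t b) * Δ b := Finset.sum_comm
        _ = ∑ t, D t a * (D.mulVec Δ t) := by
            refine Finset.sum_congr rfl fun t _ => ?_
            rw [Matrix.mulVec, dotProduct, Finset.mul_sum]
            exact Finset.sum_congr rfl fun b _ => by ring
        _ = 0 := by rw [hΔ0]; simp
    have h2 := (Finset.add_sum_erase Finset.univ (fun b => colInner D a b * Δ b)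
      (Finset.mem_univ a)).trans h0
    simp only [colInner_self hD, one_mul] at h2
    have h3 : Δ a = -∑ b ∈ Finset.univ.erase a, colInner D a b * Δ b := by linarith
    calc |Δ a| = |∑ b ∈ Finset.univ.erase a, colInner D a b * Δ b| := by rw [h3, abs_neg]
      _ ≤ ∑ b ∈ Finset.univ.erase a, |colInner D a b * Δ b| := Finset.abs_sum_le_sum_abs _ _
      _ = ∑ b ∈ Finset.univ.erase a, |Δ b| * |colInner D a b| := by
          refine Finset.sum_congr rfl fun b _ => ?_
          rw [abs_mul]; ring
  have erase_eq : ∀ (f : ZMod N × Fin m → ℝ) (s : Finset (ZMod N × Fin m)) (a),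
      ∑ b ∈ s.erase a, f b = ∑ b ∈ s, (if a = b then 0 else f b) := by
    intro f s a
    rw [Finset.sum_ite, Finset.sum_const_zero, zero_add, Finset.filter_ne]
  have step2 : A ≤ ∑ b, |Δ b| * (∑ a ∈ T.erase b, |colInner D a b|) := by
    calc A ≤ ∑ a ∈ T, ∑ b ∈ Finset.univ.erase a, |Δ b| * |colInner D a b| :=
          Finset.sum_le_sum fun a _ => hpoint a
      _ = ∑ a ∈ T, ∑ b, (if a = b then 0 else |Δ b| * |colInner D a b|) := by
          refine Finset.sum_congr rfl fun a _ => ?_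
          rw [erase_eq]
      _ = ∑ b, ∑ a ∈ T, (if a = b then 0 else |Δ b| * |colInner D a b|) := Finset.sum_comm
      _ = ∑ b, |Δ b| * (∑ a ∈ T.erase b, |colInner D a b|) := by
          refine Finset.sum_congr rfl fun b _ => ?_
          rw [Finset.sum_ite, Finset.sum_const_zero, zero_add, Finset.filter_ne',
            Finset.mul_sum]
  have hperb : ∀ b : ZMod N × Fin m,
      |Δ b| * (∑ a ∈ T.erase b, |colInner D a b|)
        ≤ |Δ b| * (Z - (if Γ b ≠ 0 then μ0 else 0)) := by
    intro b
    refine mul_le_mul_of_nonneg_left ?_ (abs_nonneg _)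
    have h1 := colsum_le hD hn Γ b
    have h2 : stripeCoherence N n m D Γ b.1 ≤ Z :=
      Finset.le_sup' (stripeCoherence N n m D Γ) (Finset.mem_univ b.1)
    rw [hT]
    linarith
  have hsumite : ∑ b, |Δ b| * (if Γ b ≠ 0 then μ0 else 0) = μ0 * A := by
    simp only [mul_ite, mul_zero]
    rw [← Finset.sum_filter, hA, Finset.mul_sum, ← hT]
    exact Finset.sum_congr rfl fun b _ => mul_comm _ _
  have key : (1 + μ0) * A ≤ Z * l1norm Δ := by
    have h1 : A ≤ ∑ b, |Δ b| * (Z - (if Γ b ≠ 0 then μ0 else 0)) :=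
      le_trans step2 (Finset.sum_le_sum fun b _ => hperb b)
    have h2 : ∑ b, |Δ b| * (Z - (if Γ b ≠ 0 then μ0 else 0))
        = Z * l1norm Δ - μ0 * A := by
      rw [← hsumite]
      simp only [l1norm]
      rw [Finset.mul_sum, ← Finset.sum_sub_distrib]
      exact Finset.sum_congr rfl fun b _ => by ring
    rw [h2] at h1
    linarith
  have hμ0nn : 0 ≤ μ0 := shiftedMu_nonneg D 0
  have hl1pos : 0 < l1norm Δ :=
    Finset.sum_pos' (fun a _ => abs_nonneg _) ⟨a0, Finset.mem_univ _, abs_pos.mpr ha0⟩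
  have hAlt : A < (1 / 2) * l1norm Δ := by
    have h2 : Z * l1norm Δ < ((1 / 2) * (1 + μ0)) * l1norm Δ :=
      mul_lt_mul_of_pos_right hΓ hl1pos
    nlinarith
  -- final comparison
  have pointwise : ∀ a : ZMod N × Fin m,
      |Γ a| + |Δ a| - 2 * (if Γ a ≠ 0 then |Δ a| else 0) ≤ |Γ' a| := by
    intro a
    by_cases h : Γ a ≠ 0
    · rw [if_pos h]
      have hga : |Γ a| ≤ |Γ' a| + |Δ a| := by
        have : Γ a = Γ' a - Δ a := by simp [hΔdef]
        rw [this]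
        exact abs_sub _ _
      linarith
    · rw [if_neg h]
      push_neg at h
      have : Γ' a = Δ a := by simp [hΔdef, h]
      rw [this, h, abs_zero]
      linarith
  have hAeq : ∑ a, (if Γ a ≠ 0 then |Δ a| else 0) = A := by
    rw [hA, hT, Finset.sum_filter]
  have sum_ineq : l1norm Γ + l1norm Δ - 2 * A ≤ l1norm Γ' := by
    have h := Finset.sum_le_sum fun a (_ : a ∈ Finset.univ) => pointwise a
    have heq2 : ∑ a, (|Γ a| + |Δ a| - 2 * (if Γ a ≠ 0 then |Δ a| else 0))
        = l1norm Γ + l1norm Δ - 2 * A := by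
      rw [Finset.sum_sub_distrib, Finset.sum_add_distrib, ← Finset.mul_sum, hAeq]
      rfl
    rw [heq2] at h
    exact h
  linarith

end
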